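/- Let F be a field and let u ∈ F((x⁻¹)) be algebraic of degree 3 over F(x), i.e., u satisfies an irreducible cubic equation with coefficients in F[x]. If u has bounded partial quotients, then every irrational element v of the field F(x)(u) generated by u over F(x) has bounded partial quotients. -/

import Mathlib

open Polynomial
open scoped Classical

noncomputable section

namespace PaperCF

/-- The element `x` of `F((x⁻¹))`, realized as the Hahn series `T⁻¹` where `T` is the
Hahn-series variable (so a series in `x⁻¹` has well-ordered support in `T`). -/
def xx (F : Type*) [Field F] : LaurentSeries F := HahnSeries.single (-1 : ℤ) 1

/-- Embedding of the polynomial ring `F[x]` into `F((x⁻¹))`, `x ↦ xx`. -/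
def polyEmb (F : Type*) [Field F] : Polynomial F →+* LaurentSeries F :=
  (Polynomial.aeval (xx F)).toRingHom

/-- The degree of a Laurent series in `x⁻¹` (largest exponent of `x` with nonzero
coefficient), with `deg 0 = ⊥`. -/
def degB (F : Type*) [Field F] (u : LaurentSeries F) : WithBot ℤ :=
  if u = 0 then ⊥ else (-u.order : ℤ)

/-- The non-archimedean absolute value `|u| = q ^ deg u` (and `|0| = 0`). -/
def absVal (F : Type*) [Field F] (q : ℝ) (u : LaurentSeries F) : ℝ :=
  if u = 0 then 0 else q ^ (-u.order)

/-- `u` is irrational: it is not a ratio of two polynomials in `x`. -/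
def IsIrrational (F : Type*) [Field F] (u : LaurentSeries F) : Prop :=
  ∀ a b : Polynomial F, b ≠ 0 → u * polyEmb F b ≠ polyEmb F a

/-- The (necessarily unique, non-terminating) continued fraction expansion of `u`:
`p i` are the partial quotients, `U i` the complete quotients.  The condition
`0 < (U i - p i).order` says exactly that `p i` is the integral part of `U i`
(the difference has only negative powers of `x`). -/
structure CFExpansion (F : Type*) [Field F] (u : LaurentSeries F) where
  p : ℕ → Polynomial F
  U : ℕ → LaurentSeries F
  U_zero : U 0 = u
  ne : ∀ i, U i ≠ polyEmb F (p i)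
  intPart : ∀ i, 0 < (U i - polyEmb F (p i)).order
  step : ∀ i, U (i + 1) = (U i - polyEmb F (p i))⁻¹

/-- Numerators `aₙ` of the convergents: `aₙ = pₙ aₙ₋₁ + aₙ₋₂`. -/
def convNum {F : Type*} [Field F] (p : ℕ → Polynomial F) : ℕ → Polynomial F
  | 0 => p 0
  | 1 => p 1 * p 0 + 1
  | (n + 2) => p (n + 2) * convNum p (n + 1) + convNum p n

/-- Denominators `bₙ` of the convergents: `bₙ = pₙ bₙ₋₁ + bₙ₋₂`. -/
def convDen {F : Type*} [Field F] (p : ℕ → Polynomial F) : ℕ → Polynomial F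
  | 0 => 1
  | 1 => p 1
  | (n + 2) => p (n + 2) * convDen p (n + 1) + convDen p n

/-- The `n`-th convergent `cₙ = aₙ/bₙ = [p₀; p₁, …, pₙ]`. -/
def conv (F : Type*) [Field F] (p : ℕ → Polynomial F) (n : ℕ) : LaurentSeries F :=
  polyEmb F (convNum p n) / polyEmb F (convDen p n)

/-- `u` has bounded partial quotients. -/
def HasBoundedPQ (F : Type*) [Field F] (u : LaurentSeries F) : Prop :=
  ∃ cf : CFExpansion F u, ∃ N : ℕ, ∀ i, (cf.p i).natDegree ≤ N

/-- The integral part `⌊u⌋ ∈ F[x]`: the sum of the terms of `u` of nonnegative degree. -/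
def intPart (F : Type*) [Field F] (u : LaurentSeries F) : Polynomial F :=
  ∑ n ∈ Finset.Icc (0 : ℤ) (-u.order), Polynomial.monomial n.toNat (u.coeff (-n))

/-- The sequence of complete quotients produced by the continued fraction algorithm
(with junk value `0⁻¹ = 0` after termination). -/
def cqSeq (F : Type*) [Field F] (u : LaurentSeries F) : ℕ → LaurentSeries F
  | 0 => u
  | n + 1 => (cqSeq F u n - polyEmb F (intPart F (cqSeq F u n)))⁻¹


/-!
Write `|w| = q ^ (-w.order)`. A series `w` has bounded partial quotients iff it is badly
approximable: `|y w - z| ≥ c / |y|` for all polynomials `y ≠ 0` and `z`. Both directions go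
through one continued fraction step `w = p + 1 / w'`, under which the pair `(y, z)` for `w`
corresponds to the pair `(z - y p, y)` for `w'`, with `|y w - z| = |(z - y p) w' - y| / |w'|`;
the partial quotients are read off from `|U i - p i| = 1 / |U (i + 1)| = q ^ (-deg p (i + 1))`.

Bad approximability is preserved by Möbius transformations `u ↦ (P u + P') / (Q u + Q')`, since
`(Q u + Q') (y v - z) = (y P - z Q) u + (y P' - z Q')`. In a cubic field every
`v = (a + b u + c u²) / d` is such a transform of `u`: multiplying numerator and denominator by
`c a₃ u + c a₂ - b a₃` and reducing with the cubic removes the `u²` term.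
-/

section

variable {F : Type*} [Field F]

theorem polyEmb_monomial (n : ℕ) (c : F) :
    polyEmb F (monomial n c) = HahnSeries.single (-n : ℤ) c := by
  rw [polyEmb, AlgHom.toRingHom_eq_coe, RingHom.coe_coe, aeval_monomial, xx, HahnSeries.single_pow,
    one_pow, nsmul_eq_mul, mul_neg_one, HahnSeries.algebraMap_apply', ← PowerSeries.C_eq_algebraMap,
    HahnSeries.ofPowerSeries_C, HahnSeries.C_apply, HahnSeries.single_mul_single, zero_add, mul_one]

theorem coeff_polyEmb_neg (p : F[X]) (n : ℕ) : (polyEmb F p).coeff (-n) = p.coeff n := by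
  induction p using Polynomial.induction_on' with
  | add p q hp hq => simp [hp, hq]
  | monomial k c => simp [polyEmb_monomial, HahnSeries.coeff_single, coeff_monomial, eq_comm]

theorem polyEmb_injective : Function.Injective (polyEmb F) := fun p q h ↦ by
  ext n; rw [← coeff_polyEmb_neg, ← coeff_polyEmb_neg, h]

theorem polyEmb_ne_zero {p : F[X]} (hp : p ≠ 0) : polyEmb F p ≠ 0 :=
  (map_ne_zero_iff _ polyEmb_injective).2 hp

theorem order_polyEmb {p : F[X]} (hp : p ≠ 0) : (polyEmb F p).order = -p.natDegree := by
  refine le_antisymm (HahnSeries.order_le_of_coeff_ne_zero ?_)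
    ((HahnSeries.le_order_iff_forall (polyEmb_ne_zero hp)).2 fun j hj ↦ ?_)
  · rw [coeff_polyEmb_neg]; exact leadingCoeff_ne_zero.2 hp
  · obtain ⟨k, rfl⟩ : ∃ k : ℕ, j = -k := ⟨(-j).toNat, by omega⟩
    rw [coeff_polyEmb_neg]
    exact coeff_eq_zero_of_natDegree_lt (by omega)

theorem order_polyEmb_nonpos (p : F[X]) : (polyEmb F p).order ≤ 0 := by
  rcases eq_or_ne p 0 with rfl | hp
  · simp
  · rw [order_polyEmb hp]; omega

theorem order_add_eq_left {x y : LaurentSeries F} (hx : x ≠ 0) (h : x.order < y.order) :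
    x + y ≠ 0 ∧ (x + y).order = x.order := by
  have hlt : x.orderTop < y.orderTop := by
    rcases eq_or_ne y 0 with rfl | hy
    · simpa using hx
    · rwa [← HahnSeries.order_eq_orderTop_of_ne_zero hx,
        ← HahnSeries.order_eq_orderTop_of_ne_zero hy, WithTop.coe_lt_coe]
  have htop := HahnSeries.orderTop_add_eq_left hlt
  have hxy : x + y ≠ 0 := fun h0 ↦ by simp [h0, eq_comm, hx] at htop
  refine ⟨hxy, ?_⟩
  rwa [← HahnSeries.order_eq_orderTop_of_ne_zero hxy, ← HahnSeries.order_eq_orderTop_of_ne_zero hx,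
    WithTop.coe_inj] at htop

theorem order_eq_neg_of_mul_eq_one {w w' : LaurentSeries F} (h : w' * w = 1) :
    w'.order = -w.order := by
  have := HahnSeries.order_mul (left_ne_zero_of_mul_eq_one h) (right_ne_zero_of_mul_eq_one h)
  rw [h, HahnSeries.order_one] at this
  omega

theorem natDegree_eq_neg_order {w : LaurentSeries F} {p : F[X]} (hw : w ≠ 0) (hw0 : w.order ≤ 0)
    (hwp : 0 < (w - polyEmb F p).order) : (p.natDegree : ℤ) = -w.order := by
  have hlt : w.order < (-(w - polyEmb F p)).order := by rw [HahnSeries.order_neg]; omega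
  obtain ⟨hne, heq⟩ := order_add_eq_left hw hlt
  rw [show w + -(w - polyEmb F p) = polyEmb F p by ring] at hne heq
  rw [order_polyEmb ((map_ne_zero_iff _ polyEmb_injective).1 hne)] at heq
  omega

theorem coeff_intPart (u : LaurentSeries F) (k : ℕ) : (intPart F u).coeff k = u.coeff (-k) := by
  rw [intPart, finsetSum_coeff, Finset.sum_eq_single (k : ℤ)]
  · simp
  · intro n hn hnk
    rw [Finset.mem_Icc] at hn
    rw [coeff_monomial, if_neg (by omega)]
  · intro hk
    rw [Finset.mem_Icc] at hk
    rw [Int.toNat_natCast, coeff_monomial_same]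
    exact HahnSeries.coeff_eq_zero_of_lt_order (by omega)

theorem order_sub_intPart_pos {u : LaurentSeries F} (hu : u ≠ polyEmb F (intPart F u)) :
    0 < (u - polyEmb F (intPart F u)).order := by
  refine (HahnSeries.le_order_iff_forall (sub_ne_zero.2 hu)).2 fun j hj ↦ ?_
  obtain ⟨k, rfl⟩ : ∃ k : ℕ, j = -k := ⟨(-j).toNat, by omega⟩
  rw [HahnSeries.coeff_sub, coeff_polyEmb_neg, coeff_intPart, sub_self]

theorem IsIrrational.ne_polyEmb {v : LaurentSeries F} (hv : IsIrrational F v) (q : F[X]) :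
    v ≠ polyEmb F q := fun h ↦ hv q 1 one_ne_zero (by rw [map_one, mul_one, h])

theorem IsIrrational.ne_zero {v : LaurentSeries F} (hv : IsIrrational F v) : v ≠ 0 := by
  simpa using hv.ne_polyEmb 0

theorem IsIrrational.sub_polyEmb {v : LaurentSeries F} (hv : IsIrrational F v) (q : F[X]) :
    IsIrrational F (v - polyEmb F q) := fun a b hb h ↦
  hv (a + q * b) b hb (by rw [map_add, map_mul]; linear_combination h)

theorem IsIrrational.inv {v : LaurentSeries F} (hv : IsIrrational F v) : IsIrrational F v⁻¹ := by
  intro a b hb h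
  have ha : a ≠ 0 := by
    rintro rfl
    exact mul_ne_zero (inv_ne_zero hv.ne_zero) (polyEmb_ne_zero hb) (by rwa [map_zero] at h)
  refine hv b a ha ?_
  rw [← h, mul_inv_cancel_left₀ hv.ne_zero]

theorem isIrrational_cqSeq {v : LaurentSeries F} (hv : IsIrrational F v) :
    ∀ n, IsIrrational F (cqSeq F v n)
  | 0 => hv
  | n + 1 => ((isIrrational_cqSeq hv n).sub_polyEmb _).inv

def IsIrrational.cfExpansion {v : LaurentSeries F} (hv : IsIrrational F v) : CFExpansion F v where
  p i := intPart F (cqSeq F v i)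
  U := cqSeq F v
  U_zero := rfl
  ne i := (isIrrational_cqSeq hv i).ne_polyEmb _
  intPart i := order_sub_intPart_pos ((isIrrational_cqSeq hv i).ne_polyEmb _)
  step _ := rfl

namespace CFExpansion

variable {w : LaurentSeries F} (cf : CFExpansion F w)

theorem U_succ_mul (i : ℕ) : cf.U (i + 1) * (cf.U i - polyEmb F (cf.p i)) = 1 := by
  rw [cf.step]; exact inv_mul_cancel₀ (sub_ne_zero.2 (cf.ne i))

theorem order_U_succ (i : ℕ) : (cf.U (i + 1)).order = -(cf.U i - polyEmb F (cf.p i)).order :=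
  order_eq_neg_of_mul_eq_one (cf.U_succ_mul i)

theorem natDegree_p_succ (i : ℕ) : ((cf.p (i + 1)).natDegree : ℤ) = -(cf.U (i + 1)).order :=
  natDegree_eq_neg_order (left_ne_zero_of_mul_eq_one (cf.U_succ_mul i))
    (by have := cf.intPart i; rw [order_U_succ]; omega) (cf.intPart (i + 1))

end CFExpansion

/-- `|y v - z| ≥ |y|⁻¹ q ^ (-γ)` for `|w| = q ^ (-w.order)`; the first conjunct is needed because
`HahnSeries.order 0 = 0`. -/
def ApproxBound (v : LaurentSeries F) (γ : ℕ) (y z : F[X]) : Prop :=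
  polyEmb F y * v - polyEmb F z ≠ 0 ∧ (polyEmb F y * v - polyEmb F z).order ≤ y.natDegree + γ

def BadlyApprox (v : LaurentSeries F) (γ : ℕ) : Prop :=
  ∀ y z : F[X], y ≠ 0 → ApproxBound v γ y z

theorem approxBound_of_mul_sub_eq_one {w w' : LaurentSeries F} {p : F[X]} {N : ℕ}
    (hw' : w' * (w - polyEmb F p) = 1) (hpos : 0 < (w - polyEmb F p).order)
    (hN : -w'.order ≤ N) {y : F[X]} (hy : y ≠ 0)
    (ih : ∀ Y Z : F[X], Y ≠ 0 → Y.natDegree < y.natDegree → ApproxBound w' N Y Z) (z : F[X]) :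
    ApproxBound w N y z := by
  have hw'0 : w' ≠ 0 := left_ne_zero_of_mul_eq_one hw'
  have hD := order_eq_neg_of_mul_eq_one hw'
  set Y := z - y * p
  have hkey : (polyEmb F y * w - polyEmb F z) * w' = -(polyEmb F Y * w' - polyEmb F y) := by
    simp only [Y, map_sub, map_mul]
    linear_combination polyEmb F y * hw'
  have hGord (h : (polyEmb F y * w - polyEmb F z) * w' ≠ 0) :
      (polyEmb F y * w - polyEmb F z).order = ((polyEmb F y * w - polyEmb F z) * w').order
        - w'.order := by
    rw [HahnSeries.order_mul (left_ne_zero_of_mul h) hw'0]; ring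
  rcases eq_or_ne Y 0 with hY | hY
  · rw [hY, map_zero, zero_mul, zero_sub, neg_neg] at hkey
    have hne : (polyEmb F y * w - polyEmb F z) * w' ≠ 0 := by rw [hkey]; exact polyEmb_ne_zero hy
    refine ⟨left_ne_zero_of_mul hne, ?_⟩
    rw [hGord hne, hkey, order_polyEmb hy]
    omega
  by_cases hdeg : (Y.natDegree : ℤ) - w'.order ≤ y.natDegree
  · obtain ⟨hne, hle⟩ := ih Y y hY (by omega)
    have hne' : (polyEmb F y * w - polyEmb F z) * w' ≠ 0 := by rw [hkey]; exact neg_ne_zero.2 hne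
    refine ⟨left_ne_zero_of_mul hne', ?_⟩
    rw [hGord hne', hkey, HahnSeries.order_neg]
    omega
  · -- `y (w - p)` is smaller than `Y`, so `y w - z = y (w - p) - Y` has the size of `Y`
    have hlt : (polyEmb F Y).order < (-(polyEmb F y * (w - polyEmb F p))).order := by
      rw [HahnSeries.order_neg, HahnSeries.order_mul (polyEmb_ne_zero hy)
        (right_ne_zero_of_mul_eq_one hw'), order_polyEmb hy, order_polyEmb hY]
      omega
    obtain ⟨hne, heq⟩ := order_add_eq_left (polyEmb_ne_zero hY) hlt
    have hG : polyEmb F Y + -(polyEmb F y * (w - polyEmb F p))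
        = -(polyEmb F y * w - polyEmb F z) := by
      simp only [Y, map_sub, map_mul]; ring
    rw [hG, neg_ne_zero] at hne
    rw [hG, HahnSeries.order_neg] at heq
    refine ⟨hne, ?_⟩
    have := order_polyEmb_nonpos Y
    omega

theorem CFExpansion.badlyApprox {w : LaurentSeries F} (cf : CFExpansion F w) {N : ℕ}
    (hN : ∀ i, (cf.p i).natDegree ≤ N) : BadlyApprox w N := by
  suffices h : ∀ n i y z, y ≠ 0 → y.natDegree = n → ApproxBound (cf.U i) N y z by
    intro y z hy
    simpa [cf.U_zero] using h _ 0 y z hy rfl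
  intro n
  induction n using Nat.strong_induction_on with
  | _ n ih =>
    rintro i y z hy rfl
    refine approxBound_of_mul_sub_eq_one (cf.U_succ_mul i) (cf.intPart i) ?_ hy
      (fun Y Z hY hlt ↦ ih _ hlt (i + 1) Y Z hY rfl) z
    have := hN (i + 1)
    have := cf.natDegree_p_succ i
    omega

theorem BadlyApprox.of_mul_sub_eq_one {w w' : LaurentSeries F} {p : F[X]} {γ : ℕ}
    (hw : BadlyApprox w γ) (hw' : w' * (w - polyEmb F p) = 1)
    (hpos : 0 < (w - polyEmb F p).order) : BadlyApprox w' γ := by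
  intro Y Z hY
  have hw'0 : w' ≠ 0 := left_ne_zero_of_mul_eq_one hw'
  have hD := order_eq_neg_of_mul_eq_one hw'
  have hYw' : polyEmb F Y * w' ≠ 0 := mul_ne_zero (polyEmb_ne_zero hY) hw'0
  have hYw'ord : (polyEmb F Y * w').order = -Y.natDegree + w'.order := by
    rw [HahnSeries.order_mul (polyEmb_ne_zero hY) hw'0, order_polyEmb hY]
  rcases eq_or_ne Z 0 with rfl | hZ
  · rw [ApproxBound, map_zero, sub_zero]
    exact ⟨hYw', by omega⟩
  obtain ⟨hG, hGle⟩ := hw Z (Y + Z * p) hZ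
  have hkey : polyEmb F Y * w' - polyEmb F Z
      = -((polyEmb F Z * w - polyEmb F (Y + Z * p)) * w') := by
    simp only [map_add, map_mul]
    linear_combination polyEmb F Z * hw'
  have hne : polyEmb F Y * w' - polyEmb F Z ≠ 0 := by
    rw [hkey]; exact neg_ne_zero.2 (mul_ne_zero hG hw'0)
  refine ⟨hne, ?_⟩
  by_cases h0 : (polyEmb F Y * w' - polyEmb F Z).order ≤ 0
  · omega
  -- `Y w' - Z` is small, so `Z` has the size of `Y w'`
  have hlt : (polyEmb F Y * w').order < (-(polyEmb F Y * w' - polyEmb F Z)).order := by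
    rw [HahnSeries.order_neg]; omega
  obtain ⟨-, hZord⟩ := order_add_eq_left hYw' hlt
  rw [show polyEmb F Y * w' + -(polyEmb F Y * w' - polyEmb F Z) = polyEmb F Z by ring,
    order_polyEmb hZ, hYw'ord] at hZord
  rw [hkey, HahnSeries.order_neg, HahnSeries.order_mul hG hw'0]
  omega

theorem BadlyApprox.natDegree_p_succ_le {w : LaurentSeries F} {γ : ℕ} (hw : BadlyApprox w γ)
    (cf : CFExpansion F w) (i : ℕ) : (cf.p (i + 1)).natDegree ≤ γ := by
  have hU : ∀ i, BadlyApprox (cf.U i) γ := fun i ↦ by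
    induction i with
    | zero => rwa [cf.U_zero]
    | succ i ih => exact ih.of_mul_sub_eq_one (cf.U_succ_mul i) (cf.intPart i)
  have h := ((hU i) 1 (cf.p i) one_ne_zero).2
  rw [map_one, one_mul, natDegree_one] at h
  have := cf.natDegree_p_succ i
  have := cf.order_U_succ i
  omega

theorem BadlyApprox.hasBoundedPQ {v : LaurentSeries F} {γ : ℕ} (hγ : BadlyApprox v γ)
    (hv : IsIrrational F v) : HasBoundedPQ F v := by
  refine ⟨hv.cfExpansion, max (hv.cfExpansion.p 0).natDegree γ, fun i ↦ ?_⟩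
  cases i with
  | zero => exact le_max_left _ _
  | succ i => exact (hγ.natDegree_p_succ_le _ i).trans (le_max_right _ _)

theorem BadlyApprox.isIrrational {u : LaurentSeries F} {γ : ℕ} (hu : BadlyApprox u γ) :
    IsIrrational F u := fun a b hb h ↦ (hu b a hb).1 (by rw [mul_comm, h, sub_self])

theorem BadlyApprox.order_add_le {u : LaurentSeries F} {γ : ℕ} (hu : BadlyApprox u γ)
    {s t : F[X]} (h : polyEmb F s * u + polyEmb F t ≠ 0) :
    (polyEmb F s * u + polyEmb F t).order ≤ s.natDegree + γ := by
  rcases eq_or_ne s 0 with rfl | hs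
  · have := order_polyEmb_nonpos t
    simp only [map_zero, zero_mul, zero_add] at h ⊢
    omega
  · simpa [sub_eq_add_neg] using (hu s (-t) hs).2

theorem natDegree_le_of_order_sub_pos {v : LaurentSeries F} (hv : v ≠ 0) {y z : F[X]} (hy : y ≠ 0)
    (h : 0 < (polyEmb F y * v - polyEmb F z).order) :
    z.natDegree ≤ y.natDegree + (-v.order).toNat := by
  rcases eq_or_ne z 0 with rfl | hz
  · simp
  have hsum := HahnSeries.min_order_le_order_add
    (x := polyEmb F y * v) (y := -(polyEmb F y * v - polyEmb F z))
    (by simpa using polyEmb_ne_zero hz)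
  rw [show polyEmb F y * v + -(polyEmb F y * v - polyEmb F z) = polyEmb F z by ring,
    HahnSeries.order_neg, HahnSeries.order_mul (polyEmb_ne_zero hy) hv, order_polyEmb hy,
    order_polyEmb hz] at hsum
  omega

theorem BadlyApprox.of_mobius {u v : LaurentSeries F} {N : ℕ} (hu : BadlyApprox u N)
    (hv : IsIrrational F v) {P P' Q Q' : F[X]} (hk : polyEmb F Q * u + polyEmb F Q' ≠ 0)
    (h : (polyEmb F Q * u + polyEmb F Q') * v = polyEmb F P * u + polyEmb F P') :
    ∃ γ, BadlyApprox v γ := by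
  set k := polyEmb F Q * u + polyEmb F Q'
  refine ⟨N + P.natDegree + Q.natDegree + (-v.order).toNat + (-k.order).toNat, fun y z hy ↦ ?_⟩
  have hG : polyEmb F y * v - polyEmb F z ≠ 0 := by
    rw [sub_ne_zero, mul_comm]; exact hv z y hy
  refine ⟨hG, ?_⟩
  by_cases hG0 : (polyEmb F y * v - polyEmb F z).order ≤ 0
  · omega
  have hz := natDegree_le_of_order_sub_pos hv.ne_zero hy (not_le.1 hG0)
  have hkey : k * (polyEmb F y * v - polyEmb F z)
      = polyEmb F (y * P - z * Q) * u + polyEmb F (y * P' - z * Q') := by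
    simp only [map_sub, map_mul]
    linear_combination polyEmb F y * h
  have hbound := hu.order_add_le (hkey ▸ mul_ne_zero hk hG)
  rw [← hkey, HahnSeries.order_mul hk hG] at hbound
  have hS : (y * P - z * Q).natDegree
      ≤ y.natDegree + (-v.order).toNat + P.natDegree + Q.natDegree := by
    refine (natDegree_sub_le _ _).trans (max_le ?_ ?_)
    · have := natDegree_mul_le (p := y) (q := P); omega
    · have := natDegree_mul_le (p := z) (q := Q); omega
  omega

theorem exists_mobius_of_cubic {u v : LaurentSeries F} (hu : IsIrrational F u)
    {a₀ a₁ a₂ a₃ : F[X]} (ha₃ : a₃ ≠ 0)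
    (hcube : polyEmb F a₀ + polyEmb F a₁ * u + polyEmb F a₂ * u ^ 2 + polyEmb F a₃ * u ^ 3 = 0)
    {a b c d : F[X]} (hd : d ≠ 0)
    (hv : polyEmb F d * v = polyEmb F a + polyEmb F b * u + polyEmb F c * u ^ 2) :
    ∃ P P' Q Q' : F[X], polyEmb F Q * u + polyEmb F Q' ≠ 0 ∧
      (polyEmb F Q * u + polyEmb F Q') * v = polyEmb F P * u + polyEmb F P' := by
  set m := polyEmb F (c * a₃) * u + polyEmb F (c * a₂ - b * a₃)
  by_cases hm : m = 0
  · have hc : c = 0 := by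
      by_contra hc
      refine hu (-(c * a₂ - b * a₃)) (c * a₃) (mul_ne_zero hc ha₃) ?_
      rw [map_neg, mul_comm]; linear_combination hm
    have hb : b = 0 := by
      simpa [m, hc, ha₃, map_eq_zero_iff _ polyEmb_injective] using hm
    exact ⟨0, a, 0, d, by simpa using polyEmb_ne_zero hd, by simpa [hb, hc] using hv⟩
  refine ⟨a₃ * (c * a₃ * a + b * c * a₂ - b ^ 2 * a₃ - c ^ 2 * a₁),
    a₃ * (a * (c * a₂ - b * a₃) - c ^ 2 * a₀), a₃ * d * (c * a₃), a₃ * d * (c * a₂ - b * a₃),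
    ?_, ?_⟩
  · have : polyEmb F (a₃ * d * (c * a₃)) * u + polyEmb F (a₃ * d * (c * a₂ - b * a₃))
        = polyEmb F a₃ * polyEmb F d * m := by simp only [m, map_mul]; ring
    rw [this]
    exact mul_ne_zero (mul_ne_zero (polyEmb_ne_zero ha₃) (polyEmb_ne_zero hd)) hm
  · simp only [map_mul, map_sub, map_add, map_pow]
    linear_combination polyEmb F a₃ * (polyEmb F c * polyEmb F a₃ * u
      + (polyEmb F c * polyEmb F a₂ - polyEmb F b * polyEmb F a₃)) * hv
      + polyEmb F c ^ 2 * polyEmb F a₃ * hcube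

end

theorem statement6_general (F : Type*) [Field F] (u : LaurentSeries F)
    (hcubic : ∃ a₀ a₁ a₂ a₃ : Polynomial F, a₃ ≠ 0 ∧
      polyEmb F a₀ + polyEmb F a₁ * u + polyEmb F a₂ * u ^ 2 + polyEmb F a₃ * u ^ 3 = 0)
    (hbd : HasBoundedPQ F u) :
    ∀ v : LaurentSeries F,
      (∃ a b c d : Polynomial F, d ≠ 0 ∧
        polyEmb F d * v = polyEmb F a + polyEmb F b * u + polyEmb F c * u ^ 2) →
      IsIrrational F v → HasBoundedPQ F v := by
  rintro v ⟨a, b, c, d, hd, hv⟩ hv_irr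
  obtain ⟨a₀, a₁, a₂, a₃, ha₃, hcube⟩ := hcubic
  obtain ⟨cf, N, hN⟩ := hbd
  have hu := cf.badlyApprox hN
  obtain ⟨P, P', Q, Q', hk, hmob⟩ := exists_mobius_of_cubic hu.isIrrational ha₃ hcube hd hv
  obtain ⟨γ, hγ⟩ := hu.of_mobius hv_irr hk hmob
  exact hγ.hasBoundedPQ hv_irr

/-- if `u` is algebraic of degree 3 over `F(x)` (it satisfies a cubic and no
nontrivial relation of degree ≤ 2) and has bounded partial quotients, then every
irrational element `v` of `F(x)(u)` (i.e. `v = (a + b·u + c·u²)/d`) has bounded partial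
quotients. -/
theorem statement6 (F : Type*) [Field F] (u : LaurentSeries F)
    (hcubic : ∃ a₀ a₁ a₂ a₃ : Polynomial F, a₃ ≠ 0 ∧
      polyEmb F a₀ + polyEmb F a₁ * u + polyEmb F a₂ * u ^ 2 + polyEmb F a₃ * u ^ 3 = 0)
    (hmin : ∀ b₀ b₁ b₂ : Polynomial F,
      polyEmb F b₀ + polyEmb F b₁ * u + polyEmb F b₂ * u ^ 2 = 0 → b₀ = 0 ∧ b₁ = 0 ∧ b₂ = 0)
    (hbd : HasBoundedPQ F u) :
    ∀ v : LaurentSeries F,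
      (∃ a b c d : Polynomial F, d ≠ 0 ∧
        polyEmb F d * v = polyEmb F a + polyEmb F b * u + polyEmb F c * u ^ 2) →
      IsIrrational F v → HasBoundedPQ F v :=
  statement6_general F u hcubic hbd

end PaperCF
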